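/- Let (L_k)_{k≥0} be a sequence of positive reals and define sequences (a_k), (A_k) by A_0 = 0, a_{k+1} = (1/L_k + sqrt(1/L_k^2 + 4 A_k/L_k))/2 and A_{k+1} = A_k + a_{k+1} for k ≥ 0. Then for all N ≥ 0, A_N ≥ (1/4) (Σ_{k=1}^N 1/sqrt(L_{k−1}))^2. -/
import Mathlib


/-- Growth lemma (Monteiro–Svaiter) for the coefficient sequence generated in
Algorithms 1 and 2: `A_N ≥ (1/4) (∑_{k=1}^N 1/√(L_{k-1}))²`. -/
theorem coefficient_growth (L a A : ℕ → ℝ) (hL : ∀ k, 0 < L k)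
    (hA0 : A 0 = 0)
    (ha : ∀ k, a (k + 1) = (1 / L k + Real.sqrt (1 / (L k) ^ 2 + 4 * A k / L k)) / 2)
    (hA : ∀ k, A (k + 1) = A k + a (k + 1)) :
    ∀ N : ℕ, A N ≥ (1 / 4) * (∑ k ∈ Finset.Icc 1 N, 1 / Real.sqrt (L (k - 1))) ^ 2 := by
  have hAnn : ∀ k, 0 ≤ A k := by
    intro k
    induction k with
    | zero => simp [hA0]
    | succ n ih =>
      have hLn := hL n
      have hs : 0 ≤ Real.sqrt (1 / (L n) ^ 2 + 4 * A n / L n) := Real.sqrt_nonneg _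
      have h1 : 0 < 1 / L n := by positivity
      rw [hA n, ha n]; linarith
  have key : ∀ n, Real.sqrt (A n) + 1 / (2 * Real.sqrt (L n)) ≤ Real.sqrt (A (n + 1)) := by
    intro n
    have hLn := hL n
    have hAn := hAnn n
    have hsL : 0 < Real.sqrt (L n) := Real.sqrt_pos.mpr hLn
    have hsA : 0 ≤ Real.sqrt (A n) := Real.sqrt_nonneg _
    have hsq : Real.sqrt (A n) ^ 2 = A n := Real.sq_sqrt hAn
    have hsqL : Real.sqrt (L n) ^ 2 = L n := Real.sq_sqrt hLn.le
    -- the inner sqrt bound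
    have h4 : (4 : ℝ) * A n / L n = (2 * Real.sqrt (A n) / Real.sqrt (L n)) ^ 2 := by
      field_simp
      nlinarith [hsq, hsqL]
    have hmono : Real.sqrt (4 * A n / L n) ≤
        Real.sqrt (1 / (L n) ^ 2 + 4 * A n / L n) := by
      apply Real.sqrt_le_sqrt
      have : 0 < 1 / (L n) ^ 2 := by positivity
      linarith
    have h4' : Real.sqrt (4 * A n / L n) = 2 * Real.sqrt (A n) / Real.sqrt (L n) := by
      rw [h4, Real.sqrt_sq (by positivity)]
    have ha' : 2 * Real.sqrt (A n) / Real.sqrt (L n) / 2 + 1 / (2 * L n) ≤ a (n + 1) := by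
      rw [ha n]
      rw [h4'] at hmono
      have : 1 / L n = 2 * (1 / (2 * L n)) := by field_simp
      linarith
    have hx : (Real.sqrt (A n) + 1 / (2 * Real.sqrt (L n))) ^ 2 ≤ A (n + 1) := by
      rw [hA n]
      have hy2 : (1 / (2 * Real.sqrt (L n))) ^ 2 = 1 / (4 * L n) := by
        rw [div_pow, mul_pow, hsqL]; norm_num
      have hxy : 2 * Real.sqrt (A n) * (1 / (2 * Real.sqrt (L n)))
          = Real.sqrt (A n) / Real.sqrt (L n) := by
        field_simp
      have hexp : (Real.sqrt (A n) + 1 / (2 * Real.sqrt (L n))) ^ 2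
          = A n + Real.sqrt (A n) / Real.sqrt (L n) + 1 / (4 * L n) := by
        rw [add_sq, hsq, hy2, hxy]
      rw [hexp]
      have h14 : 1 / (4 * L n) ≤ 1 / (2 * L n) := by
        apply div_le_div_of_nonneg_left (by norm_num) (by positivity) (by linarith)
      have : Real.sqrt (A n) / Real.sqrt (L n) = 2 * Real.sqrt (A n) / Real.sqrt (L n) / 2 := by
        ring
      linarith
    calc Real.sqrt (A n) + 1 / (2 * Real.sqrt (L n))
        = Real.sqrt ((Real.sqrt (A n) + 1 / (2 * Real.sqrt (L n))) ^ 2) :=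
          (Real.sqrt_sq (by positivity)).symm
      _ ≤ Real.sqrt (A (n + 1)) := Real.sqrt_le_sqrt hx
  have main : ∀ N, (1 / 2) * (∑ k ∈ Finset.Icc 1 N, 1 / Real.sqrt (L (k - 1)))
      ≤ Real.sqrt (A N) := by
    intro N
    induction N with
    | zero => simp
    | succ n ih =>
      rw [Finset.sum_Icc_succ_top (by omega : 1 ≤ n + 1)]
      have := key n
      simp only [Nat.add_sub_cancel]
      calc (1 / 2) * ((∑ k ∈ Finset.Icc 1 n, 1 / Real.sqrt (L (k - 1))) + 1 / Real.sqrt (L n))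
          = (1 / 2) * (∑ k ∈ Finset.Icc 1 n, 1 / Real.sqrt (L (k - 1)))
            + 1 / (2 * Real.sqrt (L n)) := by
            rw [mul_add]; congr 1; field_simp
        _ ≤ Real.sqrt (A n) + 1 / (2 * Real.sqrt (L n)) := by linarith
        _ ≤ Real.sqrt (A (n + 1)) := this
  intro N
  have hS : 0 ≤ (1 / 2) * (∑ k ∈ Finset.Icc 1 N, 1 / Real.sqrt (L (k - 1))) := by
    apply mul_nonneg (by norm_num)
    apply Finset.sum_nonneg
    intro i _
    positivity
  have h := main N
  have := mul_self_le_mul_self hS h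
  rw [Real.mul_self_sqrt (hAnn N)] at this
  nlinarith [this]
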